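/- The LS objective J̃ is twice Fréchet differentiable at every u ∈ ℂ^N (ℂ^N regarded as a real normed space), and its second derivative, as a real-bilinear form, is D²J̃(u)(p, q) = 2 Re⟨ℋ̃_u(q), p⟩ for all p, q ∈ ℂ^N, where ℋ̃_u(h) = U*(ã(u) ∘ (Uh)) + U*(b̃(u) ∘ conj(Uh)), with ã(u)_i = 1 − (M_i/(2√(|(Uu)_i|² + ε²))) · ((|(Uu)_i|² + 2ε²)/(|(Uu)_i|² + ε²)), b̃(u)_i = M_i (Uu)_i²/(2(|(Uu)_i|² + ε²)^{3/2}), ∘ denoting entrywise product, conj entrywise complex conjugation, and ⟨x, y⟩ = Σᵢ x̄ᵢ yᵢ. -/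

import Mathlib

/-- The LS objective `J̃(u) = Σᵢ (|(Uu)ᵢ|² − 2 Mᵢ √(|(Uu)ᵢ|² + ε²))`. -/
noncomputable def lsObj {N : ℕ} (U : Matrix (Fin N) (Fin N) ℂ)
    (M : Fin N → ℝ) (ε : ℝ) (u : EuclideanSpace ℂ (Fin N)) : ℝ :=
  ∑ i : Fin N,
    (‖U.mulVec u i‖ ^ 2 -
      2 * M i * Real.sqrt (‖U.mulVec u i‖ ^ 2 + ε ^ 2))

/-- The LS Hessian operator `ℋ̃_u(h) = U*(ã(u) ∘ (Uh)) + U*(b̃(u) ∘ conj(Uh))`,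
with `ã(u)ᵢ = 1 − (Mᵢ/(2√(|(Uu)ᵢ|²+ε²)))·((|(Uu)ᵢ|²+2ε²)/(|(Uu)ᵢ|²+ε²))` and
`b̃(u)ᵢ = Mᵢ (Uu)ᵢ²/(2(|(Uu)ᵢ|²+ε²)^{3/2})`. -/
noncomputable def lsHessOp {N : ℕ} (U : Matrix (Fin N) (Fin N) ℂ)
    (M : Fin N → ℝ) (ε : ℝ) (u h : EuclideanSpace ℂ (Fin N)) :
    EuclideanSpace ℂ (Fin N) :=
  WithLp.toLp 2 <| (star U).mulVec fun i =>
    ((1 - (M i / (2 * Real.sqrt (‖U.mulVec u i‖ ^ 2 + ε ^ 2))) *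
          ((‖U.mulVec u i‖ ^ 2 + 2 * ε ^ 2) /
            (‖U.mulVec u i‖ ^ 2 + ε ^ 2)) : ℝ) : ℂ) *
        U.mulVec h i +
      (M i : ℂ) * (U.mulVec u i) ^ 2 /
          ((2 * (‖U.mulVec u i‖ ^ 2 + ε ^ 2) ^ ((3 : ℝ) / 2) : ℝ) : ℂ) *
        star (U.mulVec h i)

noncomputable section
open Complex Matrix ContinuousLinearMap
namespace LSaux

variable {N : ℕ}

local notation "E" => EuclideanSpace ℂ (Fin N)

noncomputable def mvCLM (A : Matrix (Fin N) (Fin N) ℂ) : E →L[ℝ] E :=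
  LinearMap.toContinuousLinearMap
    { toFun := fun u => (WithLp.toLp 2 (A.mulVec u) : E)
      map_add' := fun x y => by
        show (WithLp.toLp 2 (A.mulVec (x + y).ofLp) : E) = WithLp.toLp 2 (A.mulVec x) + WithLp.toLp 2 (A.mulVec y)
        rw [WithLp.ofLp_add, Matrix.mulVec_add, WithLp.toLp_add]
      map_smul' := fun r x => by
        show (WithLp.toLp 2 (A.mulVec (r • x).ofLp) : E) = r • WithLp.toLp 2 (A.mulVec x)
        rw [WithLp.ofLp_smul, Matrix.mulVec_smul, WithLp.toLp_smul] }

@[simp] lemma mvCLM_apply (A : Matrix (Fin N) (Fin N) ℂ) (u : E) :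
    (mvCLM A u : E) = WithLp.toLp 2 (A.mulVec u) := rfl

/-- The bilinear form `(w, p) ↦ 2 Re ⟪w, p⟫_ℂ` as a continuous bilinear map over ℝ. -/
noncomputable def T (N : ℕ) : EuclideanSpace ℂ (Fin N) →L[ℝ] EuclideanSpace ℂ (Fin N) →L[ℝ] ℝ :=
  LinearMap.toContinuousLinearMap <|
    (LinearMap.toContinuousLinearMap :
        (EuclideanSpace ℂ (Fin N) →ₗ[ℝ] ℝ) ≃ₗ[ℝ] (EuclideanSpace ℂ (Fin N) →L[ℝ] ℝ)).toLinearMap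
      ∘ₗ (LinearMap.mk₂ ℝ (fun w p => 2 * (inner ℂ w p : ℂ).re)
        (fun w w' p => by simp [inner_add_left]; ring)
        (fun r w p => by
          rw [show r • w = (r : ℂ) • w from (RCLike.real_smul_eq_coe_smul (K := ℂ) r w)]
          simp only [inner_smul_left, RCLike.inner_apply, map_ofNat, Complex.conj_ofReal]
          simp [Finset.mul_sum, Finset.sum_mul]
          ring)
        (fun w p p' => by simp [inner_add_right]; ring)
        (fun r w p => by
          rw [show r • p = (r : ℂ) • p from (RCLike.real_smul_eq_coe_smul (K := ℂ) r p)]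
          simp only [inner_smul_right]
          simp [Finset.mul_sum, Finset.sum_mul]
          ring))

@[simp] lemma T_apply (w p : E) : T N w p = 2 * (inner ℂ w p : ℂ).re := rfl

end LSaux

namespace LSaux2
open LSaux

variable {N : ℕ}
local notation "E" => EuclideanSpace ℂ (Fin N)

variable (U : Matrix (Fin N) (Fin N) ℂ) (M : Fin N → ℝ) (ε : ℝ)

/-- `sᵢ(u) = |(Uu)ᵢ|² + ε²`. -/
def sv (u : E) (i : Fin N) : ℝ := ‖U.mulVec u i‖ ^ 2 + ε ^ 2

lemma sv_pos (hε : 0 < ε) (u : E) (i : Fin N) : 0 < sv U ε u i :=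
  add_pos_of_nonneg_of_pos (by positivity) (by positivity)

/-- the gradient field -/
def grad (u : E) : E :=
  (WithLp.toLp 2 ((star U).mulVec (fun i =>
    ((1 - M i * (Real.sqrt (sv U ε u i))⁻¹ : ℝ) : ℂ) * U.mulVec u i)) : E)

/-- coordinate evaluation CLM -/
noncomputable def ziCLM (i : Fin N) : E →L[ℝ] ℂ :=
  ((EuclideanSpace.proj i).restrictScalars ℝ).comp (mvCLM U)

@[simp] lemma ziCLM_apply (i : Fin N) (u : E) : ziCLM U i u = U.mulVec u i := rfl

lemma hz (i : Fin N) (u : E) :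
    HasFDerivAt (fun v : E => U.mulVec v i) (ziCLM U i) u :=
  by have := (ziCLM U i).hasFDerivAt (x := u); exact this

lemma hsv (hε : 0 < ε) (i : Fin N) (u : E) :
    HasFDerivAt (fun v : E => sv U ε v i)
      (2 • ((innerSL ℝ (U.mulVec u i)).comp (ziCLM U i))) u := by
  simpa [sv] using ((hz U i u).norm_sq).add_const (ε ^ 2)


lemma inner_starU (x : Fin N → ℂ) (y : E) :
    (inner ℂ ((show E from WithLp.toLp 2 ((star U).mulVec x))) y : ℂ) =
      ∑ i, (starRingEnd ℂ) (x i) * U.mulVec y i := by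
  simp only [PiLp.inner_apply, RCLike.inner_apply, Matrix.mulVec, dotProduct,
    Matrix.star_apply, map_sum, _root_.map_mul, Finset.sum_mul,
    Finset.mul_sum, Complex.star_def, Complex.conj_conj]
  rw [Finset.sum_comm]
  exact Finset.sum_congr rfl fun i _ => Finset.sum_congr rfl fun j _ => by ring

lemma lsObj_hasFDerivAt (hε : 0 < ε) (u : E) :
    HasFDerivAt (lsObj U M ε) (T N (grad U M ε u)) u := by
  have hne : ∀ i, sv U ε u i ≠ 0 := fun i => (sv_pos U ε hε u i).ne'
  have hterm : ∀ i : Fin N, HasFDerivAt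
      (fun v : E => ‖U.mulVec v i‖ ^ 2 - 2 * M i * Real.sqrt (sv U ε v i))
      ((2 • ((innerSL ℝ (U.mulVec u i)).comp (ziCLM U i))) -
        (2 * M i) • ((1 / (2 * Real.sqrt (sv U ε u i))) •
          (2 • ((innerSL ℝ (U.mulVec u i)).comp (ziCLM U i))))) u := fun i =>
    ((hz U i u).norm_sq).sub (((hsv U ε hε i u).sqrt (hne i)).const_mul (2 * M i))
  have hsum := HasFDerivAt.fun_sum (fun i (_ : i ∈ Finset.univ) => hterm i)
  have heq : lsObj U M ε = fun (v : E) => ∑ i : Fin N,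
      (‖U.mulVec v i‖ ^ 2 - 2 * M i * Real.sqrt (sv U ε v i)) := by
    funext v; simp [lsObj, sv]
  rw [heq]
  refine hsum.congr_fderiv ?_
  symm
  ext p
  have hL : T N (grad U M ε u) p =
      ∑ i, 2 * (1 - M i * (Real.sqrt (sv U ε u i))⁻¹) *
        ((starRingEnd ℂ) (U.mulVec u i) * U.mulVec p i).re := by
    rw [T_apply, grad, inner_starU]
    rw [Complex.re_sum, Finset.mul_sum]
    refine Finset.sum_congr rfl fun i _ => ?_
    rw [_root_.map_mul, Complex.conj_ofReal, mul_assoc, Complex.re_ofReal_mul]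
    ring
  rw [hL]
  simp only [ContinuousLinearMap.sum_apply, ContinuousLinearMap.sub_apply,
    ContinuousLinearMap.smul_apply, ContinuousLinearMap.comp_apply, innerSL_apply_apply,
    ziCLM_apply, smul_eq_mul, Complex.inner]
  refine Finset.sum_congr rfl fun i _ => ?_
  have h0 : Real.sqrt (sv U ε u i) ≠ 0 := by
    exact Real.sqrt_ne_zero'.mpr (sv_pos U ε hε u i)
  field_simp
  ring


lemma comp_deriv (hε : 0 < ε) (u : E) (i : Fin N) :
    ∃ D : E →L[ℝ] ℂ,
      HasFDerivAt (fun v : E =>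
          ((1 - M i * (Real.sqrt (sv U ε v i))⁻¹ : ℝ) : ℂ) * U.mulVec v i) D u ∧
      ∀ q : E, D q =
        ((1 - (M i / (2 * Real.sqrt (‖U.mulVec u i‖ ^ 2 + ε ^ 2))) *
              ((‖U.mulVec u i‖ ^ 2 + 2 * ε ^ 2) /
                (‖U.mulVec u i‖ ^ 2 + ε ^ 2)) : ℝ) : ℂ) *
            U.mulVec q i +
          (M i : ℂ) * (U.mulVec u i) ^ 2 /
              ((2 * (‖U.mulVec u i‖ ^ 2 + ε ^ 2) ^ ((3 : ℝ) / 2) : ℝ) : ℂ) *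
            star (U.mulVec q i) := by
  have hs0 : sv U ε u i ≠ 0 := (sv_pos U ε hε u i).ne'
  have hr0 : Real.sqrt (sv U ε u i) ≠ 0 := Real.sqrt_ne_zero'.mpr (sv_pos U ε hε u i)
  have h1 := (hsv U ε hε i u).sqrt hs0
  have h2 := (hasDerivAt_inv hr0).comp_hasFDerivAt u h1
  have h3 := (h2.const_mul (M i)).const_sub 1
  have h4 := Complex.ofRealCLM.hasFDerivAt.comp u h3
  refine ⟨_, h4.mul (hz U i u), ?_⟩
  intro q
  simp only [ContinuousLinearMap.add_apply, ContinuousLinearMap.smul_apply,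
    ContinuousLinearMap.comp_apply, ContinuousLinearMap.neg_apply, ziCLM_apply,
    innerSL_apply_apply, Complex.inner, Complex.ofRealCLM_apply, smul_eq_mul,
    Complex.real_smul, Complex.ofReal_mul, Complex.ofReal_neg, Complex.ofReal_sub,
    Complex.ofReal_one, Complex.ofReal_inv, Complex.ofReal_ofNat, Complex.ofReal_pow]
  have hsp := sv_pos U ε hε u i
  set z := U.mulVec u i with hzdef
  set w := U.mulVec q i with hwdef
  set t : ℝ := ‖z‖ ^ 2 with ht
  set s : ℝ := sv U ε u i with hs
  set r : ℝ := Real.sqrt s with hrr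
  have hrpos : (0:ℝ) < r := Real.sqrt_pos.mpr hsp
  have hr2 : r ^ 2 = s := Real.sq_sqrt hsp.le
  have habs : ‖z‖ ^ 2 = t := by rw [ht]
  have hts : t + ε ^ 2 = s := rfl
  have h32 : s ^ ((3:ℝ)/2) = s * r := by
    rw [hrr, show (3:ℝ)/2 = 1 + 1/2 by norm_num, Real.rpow_add hsp, Real.rpow_one,
      ← Real.sqrt_eq_rpow]
  have hzz : (starRingEnd ℂ) z * z = (t : ℂ) := by
    rw [mul_comm, Complex.mul_conj, ht]
    norm_cast
    rw [Complex.normSq_eq_norm_sq]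
  have hre : ((((w * (starRingEnd ℂ) z).re : ℝ)) : ℂ) =
      ((starRingEnd ℂ) z * w + z * ((starRingEnd ℂ) w)) / 2 := by
    have := Complex.add_conj (w * (starRingEnd ℂ) z)
    rw [eq_div_iff (two_ne_zero)]
    rw [_root_.map_mul, Complex.conj_conj] at this
    push_cast at this ⊢
    linear_combination -this
  rw [hts, h32]
  have hrC : (r:ℂ) ≠ 0 := Complex.ofReal_ne_zero.mpr hr0
  have hr2C : (r:ℂ)^2 = (t:ℂ) + (ε:ℂ)^2 := by
    have : r^2 = t + ε^2 := by rw [hr2, ← hts]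
    exact_mod_cast this
  have hsC : (s:ℂ) = (t:ℂ) + (ε:ℂ)^2 := by exact_mod_cast hts.symm
  simp only [Function.comp_apply, Complex.ofRealCLM_apply, ← hs, ← hrr, nsmul_eq_mul,
    Nat.cast_ofNat, Complex.star_def]
  push_cast
  rw [hre, show (s:ℂ) = (r:ℂ)^2 by exact_mod_cast hr2.symm]
  field_simp [hrC]
  linear_combination (((M i : ℝ):ℂ)*w) * hzz + (-2*((M i : ℝ):ℂ)*w) * hr2C


lemma grad_hasFDerivAt (hε : 0 < ε) (u : E) :
    ∃ D : E →L[ℝ] E, HasFDerivAt (grad U M ε) D u ∧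
      ∀ q : E, D q = lsHessOp U M ε u q := by
  choose Dc hDc hDval using fun i => comp_deriv U M ε hε u i
  have hPi : HasFDerivAt
      (fun v : E => fun i : Fin N =>
        ((1 - M i * (Real.sqrt (sv U ε v i))⁻¹ : ℝ) : ℂ) * U.mulVec v i)
      (ContinuousLinearMap.pi Dc) u := hasFDerivAt_pi.2 hDc
  have eS := ((PiLp.continuousLinearEquiv 2 ℝ (fun _ : Fin N => ℂ)).symm :
      (Fin N → ℂ) →L[ℝ] EuclideanSpace ℂ (Fin N))
  refine ⟨((mvCLM (star U)).comp
    ((((PiLp.continuousLinearEquiv 2 ℝ (fun _ : Fin N => ℂ)).symm :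
      (Fin N → ℂ) ≃L[ℝ] EuclideanSpace ℂ (Fin N)) :
      (Fin N → ℂ) →L[ℝ] EuclideanSpace ℂ (Fin N)).comp
      (ContinuousLinearMap.pi Dc))), ?_, ?_⟩
  · exact (mvCLM (star U)).hasFDerivAt.comp u
      ((((PiLp.continuousLinearEquiv 2 ℝ (fun _ : Fin N => ℂ)).symm :
        (Fin N → ℂ) →L[ℝ] EuclideanSpace ℂ (Fin N)).hasFDerivAt).comp u hPi)
  · intro q
    show (WithLp.toLp 2 ((star U).mulVec (fun i => Dc i q)) : E) = lsHessOp U M ε u q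
    unfold lsHessOp
    congr 1
    congr 1
    funext i
    exact hDval i q

lemma re_symm (a : ℝ) (b x y : ℂ) :
    ((starRingEnd ℂ) ((a:ℂ) * x + b * (starRingEnd ℂ) x) * y).re =
      ((starRingEnd ℂ) ((a:ℂ) * y + b * (starRingEnd ℂ) y) * x).re := by
  simp [Complex.add_re, Complex.mul_re, Complex.add_im, Complex.mul_im]
  ring

lemma hess_symm (u p q : E) :
    (inner ℂ (lsHessOp U M ε u p) q : ℂ).re = (inner ℂ (lsHessOp U M ε u q) p : ℂ).re := by
  unfold lsHessOp
  rw [inner_starU, inner_starU, Complex.re_sum, Complex.re_sum]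
  refine Finset.sum_congr rfl fun i _ => ?_
  simp only [Complex.star_def]
  exact re_symm _ _ _ _

end LSaux2
end

/-- the LS objective is twice Fréchet differentiable (over `ℝ`)
at every `u`, and its second derivative is the real-bilinear form
`(p, q) ↦ 2 Re⟪ℋ̃_u(q), p⟫`. -/
theorem lsObj_second_derivative {N : ℕ} (hN : 0 < N)
    (U : Matrix (Fin N) (Fin N) ℂ) (hU : star U * U = 1 ∧ U * star U = 1)
    (M : Fin N → ℝ) (hM : ∀ i, 0 ≤ M i) (ε : ℝ) (hε : 0 < ε) :
    Differentiable ℝ (lsObj U M ε) ∧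
    ∀ u : EuclideanSpace ℂ (Fin N),
      ∃ D : EuclideanSpace ℂ (Fin N) →L[ℝ] EuclideanSpace ℂ (Fin N) →L[ℝ] ℝ,
        HasFDerivAt (fderiv ℝ (lsObj U M ε)) D u ∧
        ∀ p q : EuclideanSpace ℂ (Fin N),
          D p q = 2 * (inner ℂ (lsHessOp U M ε u q) p : ℂ).re := by
  refine ⟨fun u => (LSaux2.lsObj_hasFDerivAt U M ε hε u).differentiableAt, fun u => ?_⟩
  obtain ⟨Hc, hH, hHval⟩ := LSaux2.grad_hasFDerivAt U M ε hε u
  refine ⟨(LSaux.T N).comp Hc, ?_, ?_⟩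
  · have hfd : fderiv ℝ (lsObj U M ε) = fun v => LSaux.T N (LSaux2.grad U M ε v) :=
      funext fun v => (LSaux2.lsObj_hasFDerivAt U M ε hε v).fderiv
    rw [hfd]
    exact ((LSaux.T N).hasFDerivAt).comp u hH
  · intro p q
    rw [ContinuousLinearMap.comp_apply, LSaux.T_apply, hHval p,
      LSaux2.hess_symm U M ε u p q]
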